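/- For every k ∈ ℕ and every n ≥ 1 there exists x ∈ c00 with ‖x‖_{ℓ1} = 1 and ‖x‖_{k+1} / ‖x‖_k ≥ n/4. Hence, for every k ∈ ℕ, sup{ ‖x‖_{k+1} / ‖x‖_k : x ∈ c00, ‖x‖_{ℓ1} = 1 } = ∞. -/

import Mathlib

/-- The ℓ¹-norm on `c00 = ℕ →₀ ℝ`. -/
noncomputable def l1 (x : ℕ →₀ ℝ) : ℝ := ∑ n ∈ x.support, |x n|

/-- `restr E x = Ex`, the restriction of `x` to the finite set `E`. -/
noncomputable def restr (E : Finset ℕ) (x : ℕ →₀ ℝ) : ℕ →₀ ℝ :=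
  x.filter (fun n => n ∈ E)

/-- `Admissible n Es` says that `E_1, …, E_n` are finite nonempty subsets of ℕ
with `n ≤ E_1 < E_2 < ⋯ < E_n`. -/
def Admissible (n : ℕ) (Es : Fin n → Finset ℕ) : Prop :=
  0 < n ∧ (∀ i, (Es i).Nonempty) ∧
    (∀ i : Fin n, ∀ a ∈ Es i, n ≤ a) ∧
    (∀ i j : Fin n, i < j → ∀ a ∈ Es i, ∀ b ∈ Es j, a < b)

/-- The Tsirelson iterate norms `‖·‖_k`. -/
noncomputable def tsir : ℕ → (ℕ →₀ ℝ) → ℝ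
  | 0, x => ⨆ n, |x n|
  | (k + 1), x => max (tsir k x)
      (sSup { r : ℝ | ∃ n : ℕ, ∃ Es : Fin n → Finset ℕ, Admissible n Es ∧
        r = (1 / 2) * ∑ i, tsir k (restr (Es i) x) })

/-!
The witness is the repeated average `x = repAvg (k + 1) m` of order `k + 1`. Splitting it into
its `m` blocks, recursively, gives `‖repAvg ℓ m‖_ℓ ≥ 2⁻ˡ`. Conversely `k` levels of admissible
splitting cannot resolve `k + 1` levels of averaging: `‖E (repAvg (d + e) m)‖_d ≤ 2ᵈ (4 / m)ᵉ`,
by induction on `d` and `e`. An admissible family of `q` sets lives on `[q, ∞)`: it sees each block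
starting at some `μ > q` with weight at most `q / μ`, and these weights sum to at most `2` because
block starts at least double; of the blocks starting at or below `q` it meets at most one, which is
handled one level of the norm up. With `e = 1` and `m = 2 · 4ᵏ · n` the ratio is at least `n / 4`.
-/

open Finset

lemma l1_nonneg (x : ℕ →₀ ℝ) : 0 ≤ l1 x :=
  sum_nonneg fun _ _ => abs_nonneg _

lemma abs_le_l1 (x : ℕ →₀ ℝ) (n : ℕ) : |x n| ≤ l1 x := by
  by_cases h : n ∈ x.support
  · exact single_le_sum (f := fun n => |x n|) (fun _ _ => abs_nonneg _) h
  · simpa [Finsupp.notMem_support_iff.mp h] using l1_nonneg x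

lemma l1_zero : l1 0 = 0 := by simp [l1]

lemma l1_smul {c : ℝ} (hc : 0 ≤ c) (x : ℕ →₀ ℝ) : l1 (c • x) = c * l1 x := by
  rw [l1, l1, mul_sum, ← sum_subset (Finsupp.support_smul (b := c) (g := x)) fun n _ hn => ?_]
  · exact sum_congr rfl fun n _ => by
      rw [Finsupp.smul_apply, smul_eq_mul, abs_mul, abs_of_nonneg hc]
  · simpa using Finsupp.notMem_support_iff.mp hn

lemma l1_sum_of_pairwise_disjoint {ι : Type*} [DecidableEq ι] (s : Finset ι)
    (f : ι → ℕ →₀ ℝ) (hf : (s : Set ι).PairwiseDisjoint fun i => (f i).support) :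
    l1 (∑ i ∈ s, f i) = ∑ i ∈ s, l1 (f i) := by
  induction s using Finset.induction with
  | empty => simp [l1_zero]
  | insert a s ha ih =>
    rw [coe_insert, Set.pairwiseDisjoint_insert_of_notMem (mod_cast ha)] at hf
    have hdisj : Disjoint (f a).support (∑ i ∈ s, f i).support :=
      disjoint_of_subset_right Finsupp.support_finsetSum
        ((disjoint_biUnion_right _ _ _).mpr fun i hi => hf.2 i hi)
    rw [sum_insert ha, sum_insert ha, ← ih hf.1]
    exact Finsupp.sum_add_index_of_disjoint hdisj _

lemma l1_restr (E : Finset ℕ) (x : ℕ →₀ ℝ) :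
    l1 (restr E x) = ∑ n ∈ x.support with n ∈ E, |x n| := by
  rw [l1, restr, Finsupp.support_filter]
  exact sum_congr rfl fun n hn => by rw [Finsupp.filter_apply_pos _ _ (mem_filter.mp hn).2]

lemma sum_l1_restr_le {ι : Type*} (s : Finset ι) (E : ι → Finset ℕ)
    (hE : (s : Set ι).PairwiseDisjoint E) (x : ℕ →₀ ℝ) :
    ∑ i ∈ s, l1 (restr (E i) x) ≤ l1 x := by
  classical
  have hdisj : (s : Set ι).PairwiseDisjoint fun i => {n ∈ x.support | n ∈ E i} :=
    hE.mono fun i _ hn => (mem_filter.mp hn).2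
  simp_rw [l1_restr]
  rw [← sum_biUnion hdisj, l1]
  exact sum_le_sum_of_subset_of_nonneg (biUnion_subset.mpr fun i _ => filter_subset _ _)
    fun _ _ _ => abs_nonneg _

lemma l1_restr_le (E : Finset ℕ) (x : ℕ →₀ ℝ) : l1 (restr E x) ≤ l1 x := by
  rw [l1_restr, l1]
  exact sum_le_sum_of_subset_of_nonneg (filter_subset _ _) fun _ _ _ => abs_nonneg _

lemma restr_restr (E F : Finset ℕ) (x : ℕ →₀ ℝ) : restr E (restr F x) = restr (E ∩ F) x := by
  ext n
  simp only [restr, Finsupp.filter_apply, mem_inter]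
  split_ifs <;> tauto

lemma restr_support_self (x : ℕ →₀ ℝ) : restr x.support x = x :=
  (Finsupp.filter_eq_self_iff _ _).mpr fun _ hn => Finsupp.mem_support_iff.mpr hn

lemma restr_eq_zero_of_disjoint {E : Finset ℕ} {x : ℕ →₀ ℝ} (h : Disjoint E x.support) :
    restr E x = 0 :=
  (Finsupp.filter_eq_zero_iff _ _).mpr fun _ hn =>
    Finsupp.notMem_support_iff.mp (disjoint_left.mp h hn)

lemma restr_eq_self_of_support_subset {E : Finset ℕ} {x : ℕ →₀ ℝ} (h : x.support ⊆ E) :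
    restr E x = x :=
  (Finsupp.filter_eq_self_iff _ _).mpr fun _ hn => h (Finsupp.mem_support_iff.mpr hn)

lemma admissible_singleton_one : Admissible 1 fun _ => {1} := by
  refine ⟨one_pos, fun _ => singleton_nonempty 1, by simp, fun i j hij => ?_⟩
  exact absurd hij (Subsingleton.elim i j ▸ lt_irrefl i)

lemma Admissible.pairwiseDisjoint {q : ℕ} {Es : Fin q → Finset ℕ} (adm : Admissible q Es) :
    ((univ : Finset (Fin q)) : Set (Fin q)).PairwiseDisjoint Es := by
  intro i _ j _ hij
  rcases hij.lt_or_gt with h | h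
  · exact disjoint_left.mpr fun a hi hj => lt_irrefl a (adm.2.2.2 i j h a hi a hj)
  · exact disjoint_left.mpr fun a hi hj => lt_irrefl a (adm.2.2.2 j i h a hj a hi)

lemma abs_le_tsir_zero (x : ℕ →₀ ℝ) (n : ℕ) : |x n| ≤ tsir 0 x :=
  le_ciSup (f := fun n => |x n|) ⟨l1 x, Set.forall_mem_range.mpr (abs_le_l1 x)⟩ n

lemma tsir_zero_le {x : ℕ →₀ ℝ} {c : ℝ} (h : ∀ n, |x n| ≤ c) : tsir 0 x ≤ c :=
  ciSup_le h

lemma tsir_succ_le {k : ℕ} {x : ℕ →₀ ℝ} {c : ℝ} (h₀ : tsir k x ≤ c)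
    (h : ∀ q Es, Admissible q Es → (1 / 2) * ∑ i, tsir k (restr (Es i) x) ≤ c) :
    tsir (k + 1) x ≤ c := by
  rw [tsir]
  refine max_le h₀ (csSup_le ⟨_, 1, _, admissible_singleton_one, rfl⟩ ?_)
  rintro r ⟨q, Es, adm, rfl⟩
  exact h q Es adm

lemma half_sum_le_l1 {k q : ℕ} {Es : Fin q → Finset ℕ} (adm : Admissible q Es)
    (hk : ∀ y, tsir k y ≤ l1 y) (x : ℕ →₀ ℝ) : (1 / 2) * ∑ i, tsir k (restr (Es i) x) ≤ l1 x :=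
  calc (1 / 2) * ∑ i, tsir k (restr (Es i) x)
      ≤ (1 / 2) * ∑ i, l1 (restr (Es i) x) := by gcongr with i; exact hk _
    _ ≤ (1 / 2) * l1 x := by gcongr; exact sum_l1_restr_le _ _ adm.pairwiseDisjoint x
    _ ≤ l1 x := by linarith [l1_nonneg x]

lemma tsir_le_l1 (k : ℕ) (x : ℕ →₀ ℝ) : tsir k x ≤ l1 x := by
  induction k generalizing x with
  | zero => exact tsir_zero_le (abs_le_l1 x)
  | succ k ih => exact tsir_succ_le (ih x) fun q Es adm => half_sum_le_l1 adm ih x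

lemma half_sum_le_tsir_succ {k q : ℕ} {Es : Fin q → Finset ℕ} (adm : Admissible q Es)
    (x : ℕ →₀ ℝ) : (1 / 2) * ∑ i, tsir k (restr (Es i) x) ≤ tsir (k + 1) x := by
  rw [tsir]
  refine le_max_of_le_right (le_csSup ⟨l1 x, ?_⟩ ⟨q, Es, adm, rfl⟩)
  rintro r ⟨q, Es, adm, rfl⟩
  exact half_sum_le_l1 adm (tsir_le_l1 k) x

lemma tsir_le_tsir_succ (k : ℕ) (x : ℕ →₀ ℝ) : tsir k x ≤ tsir (k + 1) x := by
  rw [tsir]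
  exact le_max_left _ _

lemma monotone_tsir (x : ℕ →₀ ℝ) : Monotone fun k => tsir k x :=
  monotone_nat_of_le_succ fun k => tsir_le_tsir_succ k x

lemma tsir_nonneg (k : ℕ) (x : ℕ →₀ ℝ) : 0 ≤ tsir k x :=
  (abs_nonneg _).trans <| (abs_le_tsir_zero x 0).trans <| monotone_tsir x k.zero_le

lemma tsir_pos (k : ℕ) {x : ℕ →₀ ℝ} (hx : x ≠ 0) : 0 < tsir k x := by
  obtain ⟨n, hn⟩ := Finsupp.ne_iff.mp hx
  exact (abs_pos.mpr hn).trans_le <| (abs_le_tsir_zero x n).trans <| monotone_tsir x k.zero_le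

lemma tsir_zero_right (k : ℕ) : tsir k 0 = 0 :=
  le_antisymm ((tsir_le_l1 k 0).trans_eq l1_zero) (tsir_nonneg k 0)

lemma tsir_smul_le (k : ℕ) {c : ℝ} (hc : 0 ≤ c) (x : ℕ →₀ ℝ) :
    tsir k (c • x) ≤ c * tsir k x := by
  induction k generalizing x with
  | zero =>
    refine tsir_zero_le fun n => ?_
    rw [Finsupp.smul_apply, smul_eq_mul, abs_mul, abs_of_nonneg hc]
    exact mul_le_mul_of_nonneg_left (abs_le_tsir_zero x n) hc
  | succ k ih =>
    refine tsir_succ_le ((ih x).trans (by gcongr; exact tsir_le_tsir_succ k x)) fun q Es adm => ?_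
    calc (1 / 2) * ∑ i, tsir k (restr (Es i) (c • x))
        ≤ (1 / 2) * ∑ i, c * tsir k (restr (Es i) x) := by
          gcongr with i
          rw [restr, Finsupp.filter_smul]
          exact ih _
      _ = c * ((1 / 2) * ∑ i, tsir k (restr (Es i) x)) := by rw [← mul_sum]; ring
      _ ≤ c * tsir (k + 1) x := by gcongr; exact half_sum_le_tsir_succ adm x

lemma tsir_smul (k : ℕ) {c : ℝ} (hc : 0 < c) (x : ℕ →₀ ℝ) :
    tsir k (c • x) = c * tsir k x := by
  refine le_antisymm (tsir_smul_le k hc.le x) ?_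
  have := tsir_smul_le k (inv_nonneg.mpr hc.le) (c • x)
  rw [smul_smul, inv_mul_cancel₀ hc.ne', one_smul] at this
  rwa [← le_div_iff₀' hc, div_eq_inv_mul]

lemma tsir_add_le (k : ℕ) (x y : ℕ →₀ ℝ) : tsir k (x + y) ≤ tsir k x + tsir k y := by
  induction k generalizing x y with
  | zero =>
    refine tsir_zero_le fun n => ?_
    rw [Finsupp.add_apply]
    exact (abs_add_le _ _).trans (add_le_add (abs_le_tsir_zero x n) (abs_le_tsir_zero y n))
  | succ k ih =>
    refine tsir_succ_le ((ih x y).trans (add_le_add (tsir_le_tsir_succ k x)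
      (tsir_le_tsir_succ k y))) fun q Es adm => ?_
    calc (1 / 2) * ∑ i, tsir k (restr (Es i) (x + y))
        ≤ (1 / 2) * ∑ i, (tsir k (restr (Es i) x) + tsir k (restr (Es i) y)) := by
          gcongr with i
          rw [restr, Finsupp.filter_add]
          exact ih _ _
      _ = (1 / 2) * ∑ i, tsir k (restr (Es i) x) + (1 / 2) * ∑ i, tsir k (restr (Es i) y) := by
          rw [sum_add_distrib]; ring
      _ ≤ tsir (k + 1) x + tsir (k + 1) y :=
          add_le_add (half_sum_le_tsir_succ adm x) (half_sum_le_tsir_succ adm y)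

lemma tsir_sum_le (k : ℕ) {ι : Type*} (s : Finset ι) (f : ι → ℕ →₀ ℝ) :
    tsir k (∑ i ∈ s, f i) ≤ ∑ i ∈ s, tsir k (f i) := by
  classical
  induction s using Finset.induction with
  | empty => simp [tsir_zero_right]
  | insert a s ha ih =>
    rw [sum_insert ha, sum_insert ha]
    exact (tsir_add_le k _ _).trans (add_le_add_right ih _)


lemma add_le_iterate {f : ℕ → ℕ} (hf : ∀ a, 0 < a → a < f a) {a : ℕ} (ha : 0 < a) (n : ℕ) :
    a + n ≤ f^[n] a := by
  induction n with
  | zero => simp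
  | succ n ih =>
    rw [Function.iterate_succ_apply']
    have := hf _ (by omega : 0 < f^[n] a)
    omega

/- `repAvg ℓ m` is the repeated average of order `ℓ` starting at `m`, supported in
`[m, raEnd ℓ m)`: `repAvg (ℓ + 1) m` is the average of the `m` vectors `repAvg ℓ (raStart ℓ m j)`,
`j < m`, which live on the consecutive intervals `raBlock ℓ m j`. -/
def raEnd : ℕ → ℕ → ℕ
  | 0, a => a + 1
  | ℓ + 1, a => (raEnd ℓ)^[a] a

def raStart (ℓ m j : ℕ) : ℕ := (raEnd ℓ)^[j] m

def raBlock (ℓ m j : ℕ) : Finset ℕ := Ico (raStart ℓ m j) (raStart ℓ m (j + 1))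

noncomputable def repAvg : ℕ → ℕ → ℕ →₀ ℝ
  | 0, m => Finsupp.single m 1
  | ℓ + 1, m => (m : ℝ)⁻¹ • ∑ j ∈ range m, repAvg ℓ (raStart ℓ m j)

section RepeatedAverages

variable {m : ℕ}

lemma lt_raEnd (ℓ : ℕ) {a : ℕ} (ha : 0 < a) : a < raEnd ℓ a := by
  induction ℓ generalizing a with
  | zero => simp [raEnd]
  | succ ℓ ih =>
    have := add_le_iterate (fun b hb => ih hb) ha a
    rw [raEnd]
    omega

lemma raStart_succ (ℓ m j : ℕ) : raStart ℓ m (j + 1) = raEnd ℓ (raStart ℓ m j) :=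
  Function.iterate_succ_apply' _ _ _

lemma le_raStart (ℓ m j : ℕ) (hm : 0 < m) : m + j ≤ raStart ℓ m j :=
  add_le_iterate (fun _ ha => lt_raEnd ℓ ha) hm j

lemma strictMono_raStart (ℓ : ℕ) (hm : 0 < m) : StrictMono (raStart ℓ m) :=
  strictMono_nat_of_lt_succ fun j => by
    rw [raStart_succ]
    exact lt_raEnd ℓ (by have := le_raStart ℓ m j hm; omega)

lemma two_mul_raStart_le (ℓ : ℕ) (hm : 0 < m) (j : ℕ) :
    2 * raStart (ℓ + 1) m j ≤ raStart (ℓ + 1) m (j + 1) := by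
  set a := raStart (ℓ + 1) m j
  have := le_raStart ℓ a a (by have := le_raStart (ℓ + 1) m j hm; omega)
  rw [raStart_succ, raEnd]
  exact (two_mul a).trans_le this

lemma raBlock_nonempty (ℓ : ℕ) (hm : 0 < m) (j : ℕ) : (raBlock ℓ m j).Nonempty :=
  nonempty_Ico.mpr (strictMono_raStart ℓ hm j.lt_succ_self)

lemma disjoint_raBlock (ℓ : ℕ) (hm : 0 < m) {j j' : ℕ} (h : j ≠ j') :
    Disjoint (raBlock ℓ m j) (raBlock ℓ m j') := by
  simpa only [Function.onFun, raBlock, ← disjoint_coe, coe_Ico, Order.succ_eq_add_one] using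
    (strictMono_raStart ℓ hm).monotone.pairwise_disjoint_on_Ico_succ h

lemma support_repAvg (ℓ : ℕ) (hm : 0 < m) : (repAvg ℓ m).support ⊆ Ico m (raEnd ℓ m) := by
  induction ℓ generalizing m with
  | zero => simp [repAvg, raEnd]
  | succ ℓ ih =>
    intro p hp
    obtain ⟨j, hj, hpj⟩ := mem_biUnion.mp (Finsupp.support_finsetSum (Finsupp.support_smul hp))
    have hpj := ih (by have := le_raStart ℓ m j hm; omega) hpj
    rw [← raStart_succ, mem_Ico] at hpj
    have hend : raStart ℓ m (j + 1) ≤ raStart ℓ m m :=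
      (strictMono_raStart ℓ hm).monotone (mem_range.mp hj)
    rw [mem_Ico]
    exact ⟨(le_raStart ℓ m j hm).trans' (by omega) |>.trans hpj.1, hpj.2.trans_le hend⟩

lemma support_repAvg_raStart (ℓ : ℕ) (hm : 0 < m) (j : ℕ) :
    (repAvg ℓ (raStart ℓ m j)).support ⊆ raBlock ℓ m j := by
  rw [raBlock, raStart_succ]
  exact support_repAvg ℓ (by have := le_raStart ℓ m j hm; omega)

lemma restr_raBlock_repAvg_succ (ℓ : ℕ) (hm : 0 < m) {j : ℕ} (hj : j < m) :
    restr (raBlock ℓ m j) (repAvg (ℓ + 1) m) = (m : ℝ)⁻¹ • repAvg ℓ (raStart ℓ m j) := by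
  rw [repAvg, restr, Finsupp.filter_smul, Finsupp.filter_sum,
    sum_eq_single_of_mem j (mem_range.mpr hj)]
  · exact congrArg _ (restr_eq_self_of_support_subset (support_repAvg_raStart ℓ hm j))
  · intro j' _ hj'
    exact restr_eq_zero_of_disjoint <|
      disjoint_of_subset_right (support_repAvg_raStart ℓ hm j') (disjoint_raBlock ℓ hm hj'.symm)

lemma l1_repAvg (ℓ : ℕ) (hm : 0 < m) : l1 (repAvg ℓ m) = 1 := by
  induction ℓ generalizing m with
  | zero => simp [repAvg, l1]
  | succ ℓ ih =>
    rw [repAvg, l1_smul (by positivity), l1_sum_of_pairwise_disjoint]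
    · rw [sum_congr rfl fun j _ => ih (by have := le_raStart ℓ m j hm; omega)]
      simp [hm.ne']
    · intro j _ j' _ h
      exact disjoint_of_subset_left (support_repAvg_raStart ℓ hm j)
        (disjoint_of_subset_right (support_repAvg_raStart ℓ hm j') (disjoint_raBlock ℓ hm h))

lemma repAvg_ne_zero (ℓ : ℕ) (hm : 0 < m) : repAvg ℓ m ≠ 0 := fun h => by
  simpa [h, l1_zero] using l1_repAvg ℓ hm

lemma abs_repAvg_le (ℓ : ℕ) (hm : 0 < m) (p : ℕ) : |repAvg ℓ m p| ≤ ((m : ℝ)⁻¹) ^ ℓ := by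
  induction ℓ generalizing m with
  | zero => by_cases h : m = p <;> simp [repAvg, h]
  | succ ℓ ih =>
    by_cases hp : p ∈ (repAvg (ℓ + 1) m).support
    swap
    · rw [Finsupp.notMem_support_iff.mp hp, abs_zero]
      positivity
    obtain ⟨j, hj, hpj⟩ := mem_biUnion.mp (Finsupp.support_finsetSum (Finsupp.support_smul hp))
    have hj := mem_range.mp hj
    have hstart := le_raStart ℓ m j hm
    rw [← Finsupp.filter_apply_pos (· ∈ raBlock ℓ m j) _ (support_repAvg_raStart ℓ hm j hpj)]
    change |restr (raBlock ℓ m j) (repAvg (ℓ + 1) m) p| ≤ _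
    rw [restr_raBlock_repAvg_succ ℓ hm hj, Finsupp.smul_apply, smul_eq_mul, abs_mul,
      abs_of_pos (by positivity), pow_succ']
    gcongr
    refine (ih (by omega)).trans ?_
    gcongr
    exact_mod_cast (show m ≤ raStart ℓ m j by omega)

lemma admissible_raBlock (ℓ : ℕ) (hm : 0 < m) : Admissible m fun j : Fin m => raBlock ℓ m j := by
  refine ⟨hm, fun j => raBlock_nonempty ℓ hm j, fun j a ha => ?_, fun i j hij a ha b hb => ?_⟩
  · exact (le_raStart ℓ m j hm).trans' (by omega) |>.trans (mem_Ico.mp ha).1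
  · have := (strictMono_raStart ℓ hm).monotone (show (i : ℕ) + 1 ≤ j from hij)
    exact (mem_Ico.mp ha).2.trans_le (this.trans (mem_Ico.mp hb).1)

lemma half_pow_le_tsir_repAvg (ℓ : ℕ) (hm : 0 < m) : (1 / 2) ^ ℓ ≤ tsir ℓ (repAvg ℓ m) := by
  induction ℓ generalizing m with
  | zero => simpa [repAvg] using abs_le_tsir_zero (repAvg 0 m) m
  | succ ℓ ih =>
    refine le_trans ?_ (half_sum_le_tsir_succ (admissible_raBlock ℓ hm) _)
    calc ((1 : ℝ) / 2) ^ (ℓ + 1) = (1 / 2) * ∑ _j : Fin m, (m : ℝ)⁻¹ * (1 / 2) ^ ℓ := by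
          simp [pow_succ, hm.ne']; ring
      _ ≤ (1 / 2) * ∑ j : Fin m, tsir ℓ (restr (raBlock ℓ m j) (repAvg (ℓ + 1) m)) := by
          gcongr with j
          rw [restr_raBlock_repAvg_succ ℓ hm j.2, tsir_smul ℓ (by positivity)]
          gcongr
          exact ih (by have := le_raStart ℓ m j hm; omega)

end RepeatedAverages

lemma sum_div_le_two_of_doubling {μ : ℕ → ℕ} (hμ : ∀ j, 2 * μ j ≤ μ (j + 1)) {q : ℕ}
    (hq : 0 < q) (N : ℕ) :
    ∑ j ∈ range N, (if q < μ j then (q : ℝ) / μ j else 0) ≤ 2 := by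
  set g : ℕ → ℝ := fun j => q / max q (μ j)
  have hg_pos (j : ℕ) : (0 : ℝ) < max q (μ j) := by positivity
  have hstep (j : ℕ) : (if q < μ j then (q : ℝ) / μ j else 0) ≤ 2 * (g j - g (j + 1)) := by
    split_ifs with h
    · have h' : q < μ (j + 1) := by have := hμ j; omega
      have hμj : (0 : ℝ) < μ j := by exact_mod_cast hq.trans h
      have hdouble : (2 * μ j : ℝ) ≤ μ (j + 1) := by exact_mod_cast hμ j
      simp only [g, Nat.cast_max, max_eq_right (Nat.cast_le.mpr h.le),
        max_eq_right (Nat.cast_le.mpr h'.le)]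
      have : (q : ℝ) / μ (j + 1) ≤ q / (2 * μ j) := by gcongr
      rw [div_mul_eq_div_div_swap] at this
      linarith
    · have : g (j + 1) ≤ g j := by
        simp only [g]
        gcongr
        have := hμ j
        omega
      linarith
  calc ∑ j ∈ range N, (if q < μ j then (q : ℝ) / μ j else 0)
      ≤ ∑ j ∈ range N, 2 * (g j - g (j + 1)) := sum_le_sum fun j _ => hstep j
    _ = 2 * (g 0 - g N) := by rw [← mul_sum, sum_range_sub']
    _ ≤ 2 := by
      have h0 : g 0 ≤ 1 := div_le_one_of_le₀ (mod_cast le_max_left _ _) (hg_pos 0).le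
      have hN : 0 ≤ g N := by positivity
      linarith

lemma card_filter_le_lt_succ_le_one {μ : ℕ → ℕ} (hμ : Monotone μ) (q : ℕ) (s : Finset ℕ) :
    #{j ∈ s | μ j ≤ q ∧ q < μ (j + 1)} ≤ 1 := by
  refine card_le_one.mpr fun a ha b hb => ?_
  simp only [mem_filter] at ha hb
  have key {a b : ℕ} (hb : μ b ≤ q) (ha : q < μ (a + 1)) : ¬ a < b := fun hab =>
    (hμ hab).not_gt (hb.trans_lt ha)
  exact le_antisymm (not_lt.mp (key ha.2.1 hb.2.2)) (not_lt.mp (key hb.2.1 ha.2.2))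

lemma tsir_restr_repAvg_succ_le (ℓ D m : ℕ) (F : Finset ℕ) :
    tsir D (restr F (repAvg (ℓ + 1) m)) ≤
      (m : ℝ)⁻¹ * ∑ j ∈ range m, tsir D (restr F (repAvg ℓ (raStart ℓ m j))) := by
  rw [repAvg, restr, Finsupp.filter_smul, Finsupp.filter_sum]
  exact (tsir_smul_le D (by positivity) _).trans (by gcongr; exact tsir_sum_le D _ _)

lemma tsir_zero_restr_repAvg_le (e : ℕ) {m : ℕ} (hm : 0 < m) (E : Finset ℕ) :
    tsir 0 (restr E (repAvg e m)) ≤ (4 / m) ^ e := by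
  refine tsir_zero_le fun p => ?_
  calc |restr E (repAvg e m) p| ≤ |repAvg e m p| := by
        rw [restr, Finsupp.filter_apply]
        split_ifs <;> simp
    _ ≤ ((m : ℝ)⁻¹) ^ e := abs_repAvg_le e hm p
    _ ≤ (4 / m) ^ e := by
        gcongr
        rw [inv_eq_one_div]
        gcongr
        norm_num

lemma half_sum_tsir_restr_repAvg_le {ℓ D e m q : ℕ} (hm : 2 ≤ m) {Es : Fin q → Finset ℕ}
    (adm : Admissible q Es) (E : Finset ℕ)
    (hgood : ∀ a, 2 ≤ a → ∀ F, tsir D (restr F (repAvg (ℓ + 1) a)) ≤ 2 ^ D * (4 / a) ^ (e + 1))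
    (hbad : ∀ a, 2 ≤ a → ∀ F,
      tsir (D + 1) (restr F (repAvg (ℓ + 1) a)) ≤ 2 ^ (D + 1) * (4 / a) ^ e) :
    (1 / 2) * ∑ i, tsir D (restr (Es i) (restr E (repAvg (ℓ + 2) m))) ≤
      2 ^ (D + 1) * (4 / m) ^ (e + 1) := by
  -- Blocks starting beyond `q` are bounded by `hgood`, the one block straddling `q` by `hbad`
  -- after reassembling the family `Es`, and blocks ending before `q` meet no `Es i`.
  set μ := raStart (ℓ + 1) m
  set Q : Fin q → ℕ → ℝ := fun i j => tsir D (restr (Es i ∩ E) (repAvg (ℓ + 1) (μ j)))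
  set c : ℝ := 2 ^ D * 4 ^ (e + 1) / m ^ e with hc
  have hμm (j : ℕ) : m ≤ μ j := (le_raStart (ℓ + 1) m j (by omega)).trans' (by omega)
  have hμm' (j : ℕ) : (m : ℝ) ≤ μ j := mod_cast hμm j
  have hm' : (0 : ℝ) < m := by positivity
  have hcol (j : ℕ) : ∑ i, Q i j ≤ (if q < μ j then c * (q / μ j) else 0) +
      (if μ j ≤ q ∧ q < μ (j + 1) then c else 0) := by
    rcases lt_or_ge q (μ j) with hgood_j | hle
    · rw [if_pos hgood_j, if_neg (not_and_of_not_left _ hgood_j.not_ge), add_zero]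
      have hpow : (4 / μ j : ℝ) ^ (e + 1) ≤ 4 ^ (e + 1) / m ^ e / μ j := by
        rw [div_pow, pow_succ (μ j : ℝ), div_div]
        gcongr
        · exact mul_pos (by positivity) (hm'.trans_le (hμm' j))
        · exact hμm j
      calc ∑ i, Q i j ≤ ∑ _i : Fin q, 2 ^ D * (4 / μ j : ℝ) ^ (e + 1) :=
            sum_le_sum fun i _ => hgood _ (by have := hμm j; omega) _
        _ = q * (2 ^ D * (4 / μ j : ℝ) ^ (e + 1)) := by simp
        _ ≤ q * (2 ^ D * (4 ^ (e + 1) / m ^ e / μ j)) := by gcongr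
        _ = c * (q / μ j) := by rw [hc]; ring
    rcases lt_or_ge q (μ (j + 1)) with hlt | hge
    · rw [if_neg hle.not_gt, if_pos ⟨hle, hlt⟩, zero_add]
      calc ∑ i, Q i j
          = 2 * ((1 / 2) * ∑ i, tsir D (restr (Es i) (restr E (repAvg (ℓ + 1) (μ j))))) := by
            simp only [Q, restr_restr]
            ring
        _ ≤ 2 * tsir (D + 1) (restr E (repAvg (ℓ + 1) (μ j))) := by
            gcongr
            exact half_sum_le_tsir_succ adm _
        _ ≤ 2 * (2 ^ (D + 1) * (4 / μ j) ^ e) := by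
            gcongr
            exact hbad _ (by have := hμm j; omega) E
        _ ≤ 2 * (2 ^ (D + 1) * (4 / m) ^ e) := by gcongr; exact hμm j
        _ = c := by rw [hc]; ring
    · rw [if_neg hle.not_gt, if_neg (not_and_of_not_right _ hge.not_gt), add_zero]
      refine (sum_eq_zero fun i _ => ?_).le
      refine (congrArg (tsir D) (restr_eq_zero_of_disjoint ?_)).trans (tsir_zero_right D)
      refine disjoint_of_subset_right (support_repAvg_raStart (ℓ + 1) (by omega) j) ?_
      refine disjoint_left.mpr fun a ha hb => ?_
      have := adm.2.2.1 i a (mem_inter.mp ha).1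
      simp only [raBlock, mem_Ico] at hb
      change μ j ≤ a ∧ a < μ (j + 1) at hb
      omega
  have hgood_sum : ∑ j ∈ range m, (if q < μ j then c * (q / μ j) else 0) ≤ c * 2 := by
    have := sum_div_le_two_of_doubling (two_mul_raStart_le ℓ (m := m) (by omega)) adm.1 m
    calc ∑ j ∈ range m, (if q < μ j then c * (q / μ j) else 0)
        = c * ∑ j ∈ range m, (if q < μ j then (q : ℝ) / μ j else 0) := by
          simp only [mul_sum, mul_ite, mul_zero]
      _ ≤ c * 2 := by gcongr
  have hstraddle_sum : ∑ j ∈ range m, (if μ j ≤ q ∧ q < μ (j + 1) then c else 0) ≤ c := by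
    rw [← sum_filter, sum_const, nsmul_eq_mul]
    have := card_filter_le_lt_succ_le_one (strictMono_raStart (ℓ + 1) (by omega : 0 < m)).monotone
      q (range m)
    calc (#{j ∈ range m | μ j ≤ q ∧ q < μ (j + 1)} : ℝ) * c ≤ 1 * c := by
          gcongr
          exact_mod_cast this
      _ = c := one_mul c
  calc (1 / 2) * ∑ i, tsir D (restr (Es i) (restr E (repAvg (ℓ + 2) m)))
      ≤ (1 / 2) * ∑ i, ((m : ℝ)⁻¹ * ∑ j ∈ range m, Q i j) := by
        gcongr with i
        rw [restr_restr]
        exact tsir_restr_repAvg_succ_le (ℓ + 1) D m _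
    _ = (1 / 2) * (m : ℝ)⁻¹ * ∑ j ∈ range m, ∑ i, Q i j := by
        rw [← mul_sum, sum_comm, mul_assoc]
    _ ≤ (1 / 2) * (m : ℝ)⁻¹ * (c * 2 + c) := by
        gcongr
        refine (sum_le_sum fun j _ => hcol j).trans ?_
        rw [sum_add_distrib]
        exact add_le_add hgood_sum hstraddle_sum
    _ = (3 / 4) * (2 ^ (D + 1) * (4 / m) ^ (e + 1)) := by rw [hc]; ring
    _ ≤ 2 ^ (D + 1) * (4 / m) ^ (e + 1) := by
        have : (0 : ℝ) ≤ 2 ^ (D + 1) * (4 / m) ^ (e + 1) := by positivity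
        linarith

theorem tsir_restr_repAvg_le (d e : ℕ) {m : ℕ} (hm : 2 ≤ m) (E : Finset ℕ) :
    tsir d (restr E (repAvg (d + e) m)) ≤ 2 ^ d * (4 / m) ^ e := by
  induction d generalizing e m E with
  | zero => simpa using tsir_zero_restr_repAvg_le e (by omega) E
  | succ D ihD =>
    induction e generalizing m E with
    | zero =>
      calc tsir (D + 1) (restr E (repAvg (D + 1 + 0) m))
          ≤ l1 (repAvg (D + 1 + 0) m) := (tsir_le_l1 _ _).trans (l1_restr_le E _)
        _ = 1 := l1_repAvg _ (by omega)
        _ ≤ 2 ^ (D + 1) * (4 / m) ^ 0 := by simp [one_le_pow₀]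
    | succ e ihe =>
      rw [show D + 1 + (e + 1) = D + e + 2 by ring]
      refine tsir_succ_le ?_ fun q Es adm => half_sum_tsir_restr_repAvg_le hm adm E
        (fun a ha F => by simpa only [add_assoc] using ihD (e + 1) ha F)
        (fun a ha F => by simpa only [add_right_comm] using ihe ha F)
      have h4m : (4 / m : ℝ) ≤ 2 := by
        rw [div_le_iff₀ (by positivity)]
        linarith [(Nat.ofNat_le_cast.mpr hm : (2 : ℝ) ≤ m)]
      calc tsir D (restr E (repAvg (D + e + 2) m)) ≤ 2 ^ D * (4 / m) ^ (e + 2) := ihD (e + 2) hm E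
        _ = 2 ^ D * (4 / m) ^ (e + 1) * (4 / m) := by ring
        _ ≤ 2 ^ D * (4 / m) ^ (e + 1) * 2 := by gcongr
        _ = 2 ^ (D + 1) * (4 / m) ^ (e + 1) := by ring

lemma div_le_tsir_succ_div_tsir_repAvg (k : ℕ) {m : ℕ} (hm : 2 ≤ m) :
    (m : ℝ) / (8 * 4 ^ k) ≤ tsir (k + 1) (repAvg (k + 1) m) / tsir k (repAvg (k + 1) m) := by
  have hupper := tsir_restr_repAvg_le k 1 hm (repAvg (k + 1) m).support
  rw [restr_support_self, pow_one] at hupper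
  set z := repAvg (k + 1) m
  rw [le_div_iff₀ (tsir_pos k (repAvg_ne_zero _ (by omega)))]
  calc (m : ℝ) / (8 * 4 ^ k) * tsir k z ≤ m / (8 * 4 ^ k) * (2 ^ k * (4 / m)) := by gcongr
    _ = (1 / 2) ^ (k + 1) := by
        rw [show (4 : ℝ) ^ k = 2 ^ k * 2 ^ k by rw [← mul_pow]; norm_num, one_div_pow]
        field_simp
        ring
    _ ≤ tsir (k + 1) z := half_pow_le_tsir_repAvg (k + 1) (by omega)

/-- for every `k` and `n ≥ 1` there is `x ∈ c00` with `‖x‖_{ℓ1} = 1` and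
`‖x‖_{k+1}/‖x‖_k ≥ n/4`; hence `sup { ‖x‖_{k+1}/‖x‖_k : ‖x‖_{ℓ1} = 1 } = ∞`. -/
theorem tsir_ratio_unbounded (k : ℕ) :
    (∀ n : ℕ, 1 ≤ n → ∃ x : ℕ →₀ ℝ, l1 x = 1 ∧
      (n : ℝ) / 4 ≤ tsir (k + 1) x / tsir k x) ∧
    (∀ C : ℝ, ∃ x : ℕ →₀ ℝ, l1 x = 1 ∧ C < tsir (k + 1) x / tsir k x) := by
  have hratio (n : ℕ) (hn : 1 ≤ n) : ∃ x : ℕ →₀ ℝ, l1 x = 1 ∧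
      (n : ℝ) / 4 ≤ tsir (k + 1) x / tsir k x := by
    have hm : 2 ≤ 2 * 4 ^ k * n := by
      have := Nat.one_le_pow k 4 (by norm_num)
      nlinarith
    refine ⟨repAvg (k + 1) (2 * 4 ^ k * n), l1_repAvg _ (by omega), ?_⟩
    convert div_le_tsir_succ_div_tsir_repAvg k hm using 1
    field_simp
    push_cast
    ring
  refine ⟨hratio, fun C => ?_⟩
  obtain ⟨n, hn⟩ := exists_nat_gt (4 * C)
  obtain ⟨x, hx, hle⟩ := hratio (n + 1) (by omega)
  refine ⟨x, hx, lt_of_lt_of_le ?_ hle⟩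
  push_cast
  linarith
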